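/- arXiv:2210.16940 — 4 statements merged into one kernel-verified Lean document; each statement's English description precedes it below -/
import Mathlib

section
/- Let n ≥ 2, fix a label y ∈ {1,…,n}, and let T be a positive even integer with T mod n ≠ 1. For any η in the simplex satisfying η_y = max_{i≠y} η_i (i.e., η is on the decision boundary for class y), there exists an integer vector s ∈ ℤⁿ with s_i ≥ 0, ∑ s_i = T, and s_y = max_{i≠y} s_i, such that |η_i − s_i/T| ≤ 1/T for all i. -/
/-- `η y` equals the maximum of the coordinates `η i` over `i ≠ y`. -/
def IsRunnerUpMax {n : ℕ} (y : Fin n) (η : Fin n → ℝ) : Prop :=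
  (∀ i, i ≠ y → η i ≤ η y) ∧ ∃ j, j ≠ y ∧ η j = η y

/-!
Round `T • η` down coordinatewise. Since `∑ T η_i = T`, the floors fall short of `T` by some
`d < n`, and adding `1` to `d` chosen coordinates gives an integer vector with sum `T` that is
within `1` of `T • η`. Flooring is monotone, so `y` and its tie partner `j` still share the top
value; it remains to choose the `d` coordinates without breaking that tie. For `d ≥ 2` take `y`,
`j` and any `d - 2` others; for `d = 0` take none; for `d = 1` take a coordinate strictly below
the top, which exists because otherwise `T = n ⌊T η_y⌋ + 1`, i.e. `T % n = 1`.
-/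

open Finset

section Rounding

variable {ι : Type*}

theorem sum_floor_le_of_sum_eq [Fintype ι] {x : ι → ℝ} {m : ℤ} (hx : ∑ i, x i = m) :
    ∑ i, ⌊x i⌋ ≤ m := by
  have : ((∑ i, ⌊x i⌋ : ℤ) : ℝ) ≤ m := by
    push_cast
    exact hx ▸ sum_le_sum fun i _ => Int.floor_le (x i)
  exact_mod_cast this

theorem lt_sum_floor_add_card_of_sum_eq [Fintype ι] [Nonempty ι] {x : ι → ℝ} {m : ℤ}
    (hx : ∑ i, x i = m) : m < ∑ i, ⌊x i⌋ + Fintype.card ι := by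
  have : (m : ℝ) < ((∑ i, ⌊x i⌋ + Fintype.card ι : ℤ) : ℝ) := by
    push_cast
    rw [← hx, ← card_univ, ← nsmul_one, ← sum_const, ← sum_add_distrib]
    exact sum_lt_sum_of_nonempty univ_nonempty fun i _ => Int.lt_floor_add_one (x i)
  exact_mod_cast this

theorem abs_sub_div_le_of_floor_le {T a : ℝ} (hT : 0 < T) {z : ℤ} (hlo : ⌊T * a⌋ ≤ z)
    (hhi : z ≤ ⌊T * a⌋ + 1) : |a - z / T| ≤ 1 / T := by
  have hlo' : (⌊T * a⌋ : ℝ) ≤ z := by exact_mod_cast hlo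
  have hhi' : (z : ℝ) ≤ ⌊T * a⌋ + 1 := by exact_mod_cast hhi
  have hdist : |T * a - z| ≤ 1 := by
    rw [abs_le]
    constructor <;> linarith [Int.floor_le (T * a), Int.lt_floor_add_one (T * a)]
  rw [show a - z / T = (T * a - z) / T by field_simp, abs_div, abs_of_pos hT]
  gcongr

variable [DecidableEq ι]

def bumpOn (f : ι → ℤ) (C : Finset ι) : ι → ℤ :=
  fun i => f i + if i ∈ C then 1 else 0

theorem sum_bumpOn [Fintype ι] (f : ι → ℤ) (C : Finset ι) :
    ∑ i, bumpOn f C i = ∑ i, f i + #C := by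
  simp [bumpOn, sum_add_distrib]

theorem le_bumpOn (f : ι → ℤ) (C : Finset ι) (i : ι) : f i ≤ bumpOn f C i := by
  unfold bumpOn; split_ifs <;> omega

theorem bumpOn_le (f : ι → ℤ) (C : Finset ι) (i : ι) : bumpOn f C i ≤ f i + 1 := by
  unfold bumpOn; split_ifs <;> omega

end Rounding

section RunnerUp

variable {n : ℕ} {y : Fin n}

theorem IsRunnerUpMax.le {η : Fin n → ℝ} (hη : IsRunnerUpMax y η) (i : Fin n) : η i ≤ η y := by
  by_cases hi : i = y
  · rw [hi]
  · exact hη.1 i hi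

theorem IsRunnerUpMax.comp_monotone {η : Fin n → ℝ} (hη : IsRunnerUpMax y η) {g : ℝ → ℝ}
    (hg : Monotone g) : IsRunnerUpMax y (g ∘ η) := by
  obtain ⟨hle, j, hjy, hj⟩ := hη
  exact ⟨fun i hi => hg (hle i hi), j, hjy, by simp [hj]⟩

theorem isRunnerUpMax_intCast_iff {s : Fin n → ℤ} :
    IsRunnerUpMax y (fun i => (s i : ℝ)) ↔ (∀ i, i ≠ y → s i ≤ s y) ∧ ∃ j, j ≠ y ∧ s j = s y := by
  simp only [IsRunnerUpMax, Int.cast_le, Int.cast_inj]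

theorem isRunnerUpMax_bumpOn_of_mem {f : Fin n → ℤ}
    (hf : IsRunnerUpMax y (fun i => (f i : ℝ))) {C : Finset (Fin n)} (hyC : y ∈ C) {j : Fin n}
    (hjC : j ∈ C) (hjy : j ≠ y) (hj : f j = f y) :
    IsRunnerUpMax y (fun i => (bumpOn f C i : ℝ)) := by
  have hle := (isRunnerUpMax_intCast_iff.mp hf).1
  refine isRunnerUpMax_intCast_iff.mpr ⟨fun i hi => ?_, j, hjy, by simp [bumpOn, hjC, hyC, hj]⟩
  linarith [hle i hi, bumpOn_le f C i, show bumpOn f C y = f y + 1 by simp [bumpOn, hyC]]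

theorem isRunnerUpMax_bumpOn_of_lt {f : Fin n → ℤ}
    (hf : IsRunnerUpMax y (fun i => (f i : ℝ))) {C : Finset (Fin n)}
    (hC : ∀ i ∈ C, f i < f y) :
    IsRunnerUpMax y (fun i => (bumpOn f C i : ℝ)) := by
  obtain ⟨hle, j, hjy, hj⟩ := isRunnerUpMax_intCast_iff.mp hf
  have hbump : ∀ i, f i = f y → bumpOn f C i = f i := fun i hi => by
    have hiC : i ∉ C := fun hiC => (hi ▸ hC i hiC).false
    simp [bumpOn, hiC]
  refine isRunnerUpMax_intCast_iff.mpr ⟨fun i hi => ?_, j, hjy, by rw [hbump j hj, hbump y rfl, hj]⟩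
  rw [hbump y rfl]
  by_cases hiC : i ∈ C
  · simpa [bumpOn, hiC] using hC i hiC
  · simpa [bumpOn, hiC] using hle i hi

theorem exists_card_eq_isRunnerUpMax_bumpOn {f : Fin n → ℤ}
    (hf : IsRunnerUpMax y (fun i => (f i : ℝ))) {d : ℕ} (hdn : d ≤ n)
    (hd : d = 1 → ∃ i, f i < f y) :
    ∃ C : Finset (Fin n), #C = d ∧ IsRunnerUpMax y (fun i => (bumpOn f C i : ℝ)) := by
  obtain ⟨-, j, hjy, hj⟩ := isRunnerUpMax_intCast_iff.mp hf
  rcases Nat.lt_or_ge d 2 with hd2 | hd2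
  · obtain rfl | rfl : d = 0 ∨ d = 1 := by omega
    · exact ⟨∅, rfl, isRunnerUpMax_bumpOn_of_lt hf (by simp)⟩
    · obtain ⟨i, hi⟩ := hd rfl
      exact ⟨{i}, rfl, isRunnerUpMax_bumpOn_of_lt hf (by simpa using hi)⟩
  · obtain ⟨C, hsub, hC⟩ := exists_superset_card_eq (s := {y, j})
      ((card_le_two).trans hd2) (by simpa using hdn)
    exact ⟨C, hC, isRunnerUpMax_bumpOn_of_mem hf (hsub (by simp)) (hsub (by simp)) hjy hj⟩

end RunnerUp

theorem Nat.mod_eq_one_of_intCast_eq_mul_add_one {T n : ℕ} (hn : 2 ≤ n) {c : ℤ}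
    (h : (T : ℤ) = n * c + 1) : T % n = 1 := by
  have : (T : ℤ) % n = 1 := by
    rw [h, add_comm, Int.add_mul_emod_self_left]
    exact Int.emod_eq_of_lt zero_le_one (by exact_mod_cast hn)
  exact_mod_cast this

theorem decision_boundary_grid_covering_general (n : ℕ) (hn : 2 ≤ n) (y : Fin n)
    (T : ℕ) (hT : 0 < T) (hTn : T % n ≠ 1)
    (η : Fin n → ℝ) (hpos : ∀ i, 0 ≤ η i) (hsum : ∑ i, η i = 1)
    (hbdry : IsRunnerUpMax y η) :
    ∃ s : Fin n → ℤ, (∀ i, 0 ≤ s i) ∧ (∑ i, s i = (T : ℤ)) ∧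
      IsRunnerUpMax y (fun i => (s i : ℝ)) ∧
      ∀ i, |η i - (s i : ℝ) / (T : ℝ)| ≤ 1 / (T : ℝ) := by
  have hTpos : (0 : ℝ) < T := by exact_mod_cast hT
  have : Nonempty (Fin n) := ⟨y⟩
  set f : Fin n → ℤ := fun i => ⌊(T : ℝ) * η i⌋
  have hf : IsRunnerUpMax y (fun i => (f i : ℝ)) :=
    hbdry.comp_monotone fun a b hab => Int.cast_mono (Int.floor_mono (by gcongr))
  have hTsum : ∑ i, (T : ℝ) * η i = ((T : ℤ) : ℝ) := by rw [← mul_sum, hsum]; simp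
  have hlo : ∑ i, f i ≤ T := sum_floor_le_of_sum_eq hTsum
  have hhi : (T : ℤ) < ∑ i, f i + n := by
    simpa using lt_sum_floor_add_card_of_sum_eq hTsum
  obtain ⟨d, hd⟩ : ∃ d : ℕ, (T : ℤ) = ∑ i, f i + d := ⟨(T - ∑ i, f i).toNat, by omega⟩
  have hd1 : d = 1 → ∃ i, f i < f y := by
    rintro rfl
    by_contra! hall
    have hconst : ∑ i, f i = n * f y := by
      simp [fun i => le_antisymm (Int.cast_le.mp (hf.le i)) (hall i)]
    exact hTn (Nat.mod_eq_one_of_intCast_eq_mul_add_one hn (by rw [hd, hconst, Nat.cast_one]))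
  obtain ⟨C, hC, hCmax⟩ := exists_card_eq_isRunnerUpMax_bumpOn hf (by omega) hd1
  refine ⟨bumpOn f C, fun i => ?_, by rw [sum_bumpOn, hC, hd], hCmax, fun i => ?_⟩
  · exact (Int.floor_nonneg.2 (mul_nonneg hTpos.le (hpos i))).trans (le_bumpOn f C i)
  · exact abs_sub_div_le_of_floor_le hTpos (le_bumpOn f C i) (bumpOn_le f C i)

theorem decision_boundary_grid_covering (n : ℕ) (hn : 2 ≤ n) (y : Fin n)
    (T : ℕ) (hT : 0 < T) (hTeven : T % 2 = 0) (hTn : T % n ≠ 1)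
    (η : Fin n → ℝ) (hpos : ∀ i, 0 ≤ η i) (hsum : ∑ i, η i = 1)
    (hbdry : IsRunnerUpMax y η) :
    ∃ s : Fin n → ℤ, (∀ i, 0 ≤ s i) ∧ (∑ i, s i = (T : ℤ)) ∧
      IsRunnerUpMax y (fun i => (s i : ℝ)) ∧
      ∀ i, |η i - (s i : ℝ) / (T : ℝ)| ≤ 1 / (T : ℝ) :=
  decision_boundary_grid_covering_general n hn y T hT hTn η hpos hsum hbdry
end

section
/- Let κ > 0, V̲ > 0, and suppose the disturbance magnitude satisfies ε̄ ≤ κ·V̲/(L_V·L). If ⟨∇V(η), f(η, x)⟩ ≤ −κ V(η) on the level set {η : V(η) = V̲}, ‖∇V‖₂ ≤ L_V, and f is L-Lipschitz in x, then for any perturbation ‖ε‖₂ ≤ ε̄ and any η with V(η) = V̲, ⟨∇V(η), f(η, x + ε)⟩ ≤ 0. -/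
/-! On the level set `V = V̲` the nominal drift satisfies `⟪∇V, f(η, x)⟫ ≤ -κ V̲`. Moving the input
from `x` to `x + ε` changes `f` by at most `L ε̄`, hence the drift by at most `L_V L ε̄`
(Cauchy–Schwarz), and the hypothesis on `ε̄` says exactly that this budget does not exceed `κ V̲`. -/

open RealInnerProductSpace in
theorem LipschitzWith.inner_apply_add_le {E F : Type*} [NormedAddCommGroup E]
    [InnerProductSpace ℝ E] [SeminormedAddCommGroup F] {K : NNReal} {φ : F → E}
    (hφ : LipschitzWith K φ) (g : E) (x ε : F) :
    ⟪g, φ (x + ε)⟫ ≤ ⟪g, φ x⟫ + ‖g‖ * (K * ‖ε‖) := by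
  have hstep : ‖φ (x + ε) - φ x‖ ≤ K * ‖ε‖ := by
    simpa only [add_sub_cancel_left] using hφ.norm_sub_le (x + ε) x
  calc ⟪g, φ (x + ε)⟫ = ⟪g, φ x⟫ + ⟪g, φ (x + ε) - φ x⟫ := by
        rw [← inner_add_right, add_sub_cancel]
    _ ≤ ⟪g, φ x⟫ + ‖g‖ * (K * ‖ε‖) := by
        gcongr
        exact (real_inner_le_norm _ _).trans (mul_le_mul_of_nonneg_left hstep (norm_nonneg g))

open RealInnerProductSpace in
theorem sufficient_exponential_stability_general (k n : ℕ)
    (V : EuclideanSpace ℝ (Fin k) → ℝ)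
    (gradV : EuclideanSpace ℝ (Fin k) → EuclideanSpace ℝ (Fin k))
    (f : EuclideanSpace ℝ (Fin k) → EuclideanSpace ℝ (Fin n) → EuclideanSpace ℝ (Fin k))
    (κ Vlow L LV εbar : ℝ)
    (hκ : 0 < κ) (hVlow : 0 < Vlow) (hL : 0 ≤ L) (hLV : 0 ≤ LV)
    (hε : εbar ≤ κ * Vlow / (LV * L))
    (hlyap : ∀ η, V η = Vlow → ∀ x, ⟪gradV η, f η x⟫ ≤ -κ * V η)
    (hlip : ∀ η, LipschitzWith (Real.toNNReal L) (f η))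
    (hgradbound : ∀ η, ‖gradV η‖ ≤ LV) :
    ∀ η, V η = Vlow → ∀ x ε : EuclideanSpace ℝ (Fin n), ‖ε‖ ≤ εbar →
      ⟪gradV η, f η (x + ε)⟫ ≤ 0 := by
  intro η hη x ε hεb
  have hbudget : εbar * (LV * L) ≤ κ * Vlow :=
    mul_le_of_le_div₀ (by positivity) (by positivity) hε
  have hnominal := hlyap η hη x
  rw [hη] at hnominal
  calc ⟪gradV η, f η (x + ε)⟫
      ≤ ⟪gradV η, f η x⟫ + ‖gradV η‖ * (L.toNNReal * ‖ε‖) := (hlip η).inner_apply_add_le _ x ε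
    _ ≤ -κ * Vlow + LV * (L * εbar) := by
        rw [Real.coe_toNNReal L hL]
        gcongr
        exact hgradbound η
    _ ≤ 0 := by linarith

open RealInnerProductSpace in
theorem sufficient_exponential_stability (k n : ℕ)
    (V : EuclideanSpace ℝ (Fin k) → ℝ)
    (gradV : EuclideanSpace ℝ (Fin k) → EuclideanSpace ℝ (Fin k))
    (f : EuclideanSpace ℝ (Fin k) → EuclideanSpace ℝ (Fin n) → EuclideanSpace ℝ (Fin k))
    (κ Vlow L LV εbar : ℝ)
    (hκ : 0 < κ) (hVlow : 0 < Vlow) (hL : 0 ≤ L) (hLV : 0 ≤ LV) (hεpos : 0 ≤ εbar)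
    (hε : εbar ≤ κ * Vlow / (LV * L))
    (hgrad : ∀ η, HasGradientAt V (gradV η) η)
    (hlyap : ∀ η, V η = Vlow → ∀ x, ⟪gradV η, f η x⟫ ≤ -κ * V η)
    (hlip : ∀ η, LipschitzWith (Real.toNNReal L) (f η))
    (hgradbound : ∀ η, ‖gradV η‖ ≤ LV) :
    ∀ η, V η = Vlow → ∀ x ε : EuclideanSpace ℝ (Fin n), ‖ε‖ ≤ εbar →
      ⟪gradV η, f η (x + ε)⟫ ≤ 0 :=
  sufficient_exponential_stability_general k n V gradV f κ Vlow L LV εbar hκ hVlow hL hLV hε hlyap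
    hlip hgradbound
end

section
/- Let P(l, u, f̂) be the solution of min_f ½‖f − f̂‖₂² subject to 1ᵀf = b and l ≤ f ≤ u, assuming feasibility. Fix a coordinate i. Then P(l, u, f̂)_i is non-decreasing in f̂_i, non-increasing in f̂_j for j ≠ i, non-decreasing in l_i and u_i, and non-increasing in l_j and u_j for j ≠ i. Consequently, if l̲ ≤ l ≤ l̄, ū̲ ≤ u ≤ ū, and f̲ ≤ f̂ ≤ f̄ componentwise, then P(l, u, f̂)_i is bounded below by P evaluated with the i-th bounds at their lower values and all other coordinates' bounds at their upper values, and bounded above symmetrically. -/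
/-!
Moving mass `ε` from coordinate `q` to coordinate `p` of a feasible point changes the objective by
`2ε((f p - f̂ p) - (f q - f̂ q)) + 2ε²`. Hence at the minimiser `f`, whenever `f p < u p` and
`l q < f q`, the residuals satisfy `f̂ p - f p ≤ f̂ q - f q`.

Raise the data `l`, `u`, `f̂` at `i` and lower it elsewhere, and suppose the new minimiser `f'` had
`f' i < f i`. Both minimisers sum to `b`, so `f k < f' k` for some `k ≠ i`. The boxes then allow a
transfer from `i` to `k` in the old problem and from `k` to `i` in the new one, and the two residual
inequalities contradict each other. All five claims are instances of this comparison.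
-/

/-- Feasibility for the CBF-QP: sum constraint and box constraints. -/
def QPFeasible {n : ℕ} (b : ℝ) (l u g : Fin n → ℝ) : Prop :=
  (∑ i, g i = b) ∧ ∀ i, l i ≤ g i ∧ g i ≤ u i

/-- The problem data `(l, u)` is feasible. -/
def QPDataFeasible {n : ℕ} (b : ℝ) (l u : Fin n → ℝ) : Prop :=
  (∀ i, l i ≤ u i) ∧ ∑ i, l i ≤ b ∧ b ≤ ∑ i, u i

/-- `mix i a c` takes the `i`-th coordinate from `a` and all others from `c`. -/
def mix {n : ℕ} (i : Fin n) (a c : Fin n → ℝ) : Fin n → ℝ :=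
  fun j => if j = i then a j else c j

open Finset

def IsQPMin {n : ℕ} (b : ℝ) (l u a f : Fin n → ℝ) : Prop :=
  QPFeasible b l u f ∧ ∀ g, QPFeasible b l u g → ∑ k, (f k - a k) ^ 2 ≤ ∑ k, (g k - a k) ^ 2

theorem sum_sub_sum_eq_of_eq_off_pair {ι M : Type*} [Fintype ι] [AddCommGroup M]
    {p q : ι} (hpq : p ≠ q) {F G : ι → M} (h : ∀ k, k ≠ p → k ≠ q → F k = G k) :
    ∑ k, F k - ∑ k, G k = (F p - G p) + (F q - G q) := by
  rw [← Finset.sum_sub_distrib]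
  exact Fintype.sum_eq_add p q hpq fun k hk => sub_eq_zero.2 (h k hk.1 hk.2)

theorem exists_ne_lt_of_sum_eq {ι : Type*} [Fintype ι] [DecidableEq ι] {f f' : ι → ℝ}
    (hs : ∑ k, f k = ∑ k, f' k) {i : ι} (hi : f i < f' i) : ∃ k, k ≠ i ∧ f' k < f k := by
  have hrest : ∑ k ∈ univ.erase i, f' k < ∑ k ∈ univ.erase i, f k := by
    have := add_sum_erase univ f (mem_univ i)
    have := add_sum_erase univ f' (mem_univ i)
    linarith
  obtain ⟨k, hk, hlt⟩ := exists_lt_of_sum_lt hrest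
  exact ⟨k, ne_of_mem_erase hk, hlt⟩

section Transfer

variable {n : ℕ} {b ε : ℝ} {l u a f g : Fin n → ℝ} {p q : Fin n}

theorem QPFeasible.of_transfer (hf : QPFeasible b l u f) (hpq : p ≠ q)
    (hgp : g p = f p + ε) (hgq : g q = f q - ε) (hg : ∀ k, k ≠ p → k ≠ q → g k = f k)
    (hε : 0 ≤ ε) (hεp : ε ≤ u p - f p) (hεq : ε ≤ f q - l q) :
    QPFeasible b l u g := by
  refine ⟨?_, fun k => ?_⟩
  · have := sum_sub_sum_eq_of_eq_off_pair hpq hg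
    rw [hgp, hgq] at this
    linarith [hf.1]
  · obtain ⟨hlk, huk⟩ := hf.2 k
    by_cases hkp : k = p
    · subst hkp; rw [hgp]; constructor <;> linarith
    by_cases hkq : k = q
    · subst hkq; rw [hgq]; constructor <;> linarith
    rw [hg k hkp hkq]
    exact ⟨hlk, huk⟩

theorem sum_sq_sub_sum_sq_of_transfer (hpq : p ≠ q)
    (hgp : g p = f p + ε) (hgq : g q = f q - ε) (hg : ∀ k, k ≠ p → k ≠ q → g k = f k) :
    ∑ k, (g k - a k) ^ 2 - ∑ k, (f k - a k) ^ 2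
      = 2 * ε * ((f p - a p) - (f q - a q)) + 2 * ε ^ 2 := by
  rw [sum_sub_sum_eq_of_eq_off_pair hpq fun k hkp hkq => by rw [hg k hkp hkq], hgp, hgq]
  ring

theorem IsQPMin.sub_le_sub (hf : IsQPMin b l u a f) (hpq : p ≠ q)
    (hp : f p < u p) (hq : l q < f q) :
    a p - f p ≤ a q - f q := by
  by_contra! hlt
  set D := (a p - f p) - (a q - f q)
  have hD : 0 < D := sub_pos.2 hlt
  set ε := min (min (u p - f p) (f q - l q)) (D / 2)
  have hεpos : 0 < ε := lt_min (lt_min (by linarith) (by linarith)) (by linarith)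
  have hεD : ε ≤ D / 2 := min_le_right _ _
  set g := Function.update (Function.update f q (f q - ε)) p (f p + ε)
  have hgp : g p = f p + ε := by simp [g]
  have hgq : g q = f q - ε := by simp [g, hpq.symm]
  have hg : ∀ k, k ≠ p → k ≠ q → g k = f k := fun k hkp hkq => by simp [g, hkp, hkq]
  have hgfeas : QPFeasible b l u g :=
    hf.1.of_transfer hpq hgp hgq hg hεpos.le
      ((min_le_left _ _).trans (min_le_left _ _)) ((min_le_left _ _).trans (min_le_right _ _))
  have hchange := sum_sq_sub_sum_sq_of_transfer (a := a) hpq hgp hgq hg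
  have hopt := hf.2 g hgfeas
  nlinarith

end Transfer

def SignedLE {n : ℕ} (i : Fin n) (x y : Fin n → ℝ) : Prop :=
  x i ≤ y i ∧ ∀ k, k ≠ i → y k ≤ x k

section SignedLE

variable {n : ℕ} {i j : Fin n} {x y lo hi : Fin n → ℝ}

theorem SignedLE.refl (i : Fin n) (x : Fin n → ℝ) : SignedLE i x x :=
  ⟨le_rfl, fun _ _ => le_rfl⟩

theorem signedLE_of_eq_off_self (h : ∀ k, k ≠ i → y k = x k) (hxy : x i ≤ y i) :
    SignedLE i x y :=
  ⟨hxy, fun k hk => (h k hk).le⟩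

theorem signedLE_of_eq_off_ne (hji : j ≠ i) (h : ∀ k, k ≠ j → y k = x k) (hj : x j ≤ y j) :
    SignedLE i y x := by
  refine ⟨(h i hji.symm).le, fun k hk => ?_⟩
  by_cases hkj : k = j
  · exact hkj ▸ hj
  · exact (h k hkj).ge

theorem signedLE_mix_left (h : ∀ k, lo k ≤ x k ∧ x k ≤ hi k) : SignedLE i (mix i lo hi) x :=
  ⟨by simp [mix, (h i).1], fun k hk => by simp [mix, hk, (h k).2]⟩

theorem signedLE_mix_right (h : ∀ k, lo k ≤ x k ∧ x k ≤ hi k) : SignedLE i x (mix i hi lo) :=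
  ⟨by simp [mix, (h i).2], fun k hk => by simp [mix, hk, (h k).1]⟩

end SignedLE

theorem IsQPMin.apply_le_of_signedLE {n : ℕ} {b : ℝ} {l u a f l' u' a' f' : Fin n → ℝ}
    {i : Fin n} (hf : IsQPMin b l u a f) (hf' : IsQPMin b l' u' a' f')
    (hl : SignedLE i l l') (hu : SignedLE i u u') (ha : SignedLE i a a') :
    f i ≤ f' i := by
  by_contra! hlt
  obtain ⟨k, hki, hk⟩ := exists_ne_lt_of_sum_eq (by rw [hf.1.1, hf'.1.1]) hlt
  have hfi : l i < f i := (hl.1.trans (hf'.1.2 i).1).trans_lt hlt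
  have hfk : f k < u k := hk.trans_le ((hf'.1.2 k).2.trans (hu.2 k hki))
  have hfi' : f' i < u' i := hlt.trans_le ((hf.1.2 i).2.trans hu.1)
  have hfk' : l' k < f' k := ((hl.2 k hki).trans (hf.1.2 k).1).trans_lt hk
  have := hf.sub_le_sub hki hfk hfi
  have := hf'.sub_le_sub hki.symm hfi' hfk'
  linarith [ha.1, ha.2 k hki]

theorem cbfqp_interval_bound_propagation (n : ℕ) (b : ℝ)
    (P : (Fin n → ℝ) → (Fin n → ℝ) → (Fin n → ℝ) → (Fin n → ℝ))
    (hP : ∀ l u fhat, QPDataFeasible b l u →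
      QPFeasible b l u (P l u fhat) ∧
        ∀ g, QPFeasible b l u g →
          (1 / 2) * ∑ k, (P l u fhat k - fhat k) ^ 2 ≤ (1 / 2) * ∑ k, (g k - fhat k) ^ 2) :
    -- monotone non-decreasing in `fhat i`
    (∀ l u fhat fhat' (i : Fin n), QPDataFeasible b l u →
      (∀ j, j ≠ i → fhat' j = fhat j) → fhat i ≤ fhat' i →
      P l u fhat i ≤ P l u fhat' i) ∧
    -- monotone non-increasing in `fhat j` for `j ≠ i`
    (∀ l u fhat fhat' (i j : Fin n), j ≠ i → QPDataFeasible b l u →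
      (∀ j', j' ≠ j → fhat' j' = fhat j') → fhat j ≤ fhat' j →
      P l u fhat' i ≤ P l u fhat i) ∧
    -- monotone non-decreasing in `l i` and `u i`
    (∀ l l' u u' fhat (i : Fin n), QPDataFeasible b l u → QPDataFeasible b l' u' →
      (∀ j, j ≠ i → l' j = l j) → (∀ j, j ≠ i → u' j = u j) →
      l i ≤ l' i → u i ≤ u' i →
      P l u fhat i ≤ P l' u' fhat i) ∧
    -- monotone non-increasing in `l j` and `u j` for `j ≠ i`
    (∀ l l' u u' fhat (i j : Fin n), j ≠ i → QPDataFeasible b l u → QPDataFeasible b l' u' →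
      (∀ j', j' ≠ j → l' j' = l j') → (∀ j', j' ≠ j → u' j' = u j') →
      l j ≤ l' j → u j ≤ u' j →
      P l' u' fhat i ≤ P l u fhat i) ∧
    -- consequent interval bounds
    (∀ llo lhi ulo uhi flo fhi l u fhat (i : Fin n),
      QPDataFeasible b l u →
      QPDataFeasible b (mix i llo lhi) (mix i ulo uhi) →
      QPDataFeasible b (mix i lhi llo) (mix i uhi ulo) →
      (∀ j, llo j ≤ l j ∧ l j ≤ lhi j) →
      (∀ j, ulo j ≤ u j ∧ u j ≤ uhi j) →
      (∀ j, flo j ≤ fhat j ∧ fhat j ≤ fhi j) →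
      P (mix i llo lhi) (mix i ulo uhi) (mix i flo fhi) i ≤ P l u fhat i ∧
      P l u fhat i ≤ P (mix i lhi llo) (mix i uhi ulo) (mix i fhi flo) i) := by
  have hmin : ∀ l u a, QPDataFeasible b l u → IsQPMin b l u a (P l u a) := fun l u a hd =>
    ⟨(hP l u a hd).1, fun g hg => by linarith [(hP l u a hd).2 g hg]⟩
  refine ⟨?_, ?_, ?_, ?_, ?_⟩
  · intro l u a a' i hd hoff hi
    exact (hmin l u a hd).apply_le_of_signedLE (hmin l u a' hd) (.refl i l) (.refl i u)
      (signedLE_of_eq_off_self hoff hi)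
  · intro l u a a' i j hji hd hoff hj
    exact (hmin l u a' hd).apply_le_of_signedLE (hmin l u a hd) (.refl i l) (.refl i u)
      (signedLE_of_eq_off_ne hji hoff hj)
  · intro l l' u u' a i hd hd' hloff huoff hli hui
    exact (hmin l u a hd).apply_le_of_signedLE (hmin l' u' a hd')
      (signedLE_of_eq_off_self hloff hli) (signedLE_of_eq_off_self huoff hui) (.refl i a)
  · intro l l' u u' a i j hji hd hd' hloff huoff hlj huj
    exact (hmin l' u' a hd').apply_le_of_signedLE (hmin l u a hd)
      (signedLE_of_eq_off_ne hji hloff hlj) (signedLE_of_eq_off_ne hji huoff huj) (.refl i a)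
  · intro llo lhi ulo uhi flo fhi l u a i hd hdlo hdhi hl hu ha
    exact ⟨(hmin _ _ _ hdlo).apply_le_of_signedLE (hmin l u a hd)
        (signedLE_mix_left hl) (signedLE_mix_left hu) (signedLE_mix_left ha),
      (hmin l u a hd).apply_le_of_signedLE (hmin _ _ _ hdhi)
        (signedLE_mix_right hl) (signedLE_mix_right hu) (signedLE_mix_right ha)⟩
end

section
/- Let g : [0,∞) → ℝ be continuous, differentiable on (0,∞), with g(0) ≥ 0 and g'(t) ≥ 0 whenever g(t) = 0. If additionally g'(t) ≥ −α(g(t)) for a locally Lipschitz strictly increasing α with α(0) = 0, then g(t) ≥ 0 for all t ≥ 0. -/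
/-! Where `g < 0` we get `g' ≥ -α (g) > -α 0 = 0`, so `g` is strictly increasing on every
interval on which it is negative. If `g (t₁) < 0`, take the last `t₀ ≤ t₁` with `g (t₀) ≥ 0`:
then `g` is negative on `(t₀, t₁]`, hence `g (t₀) < g (t₁) < 0`, a contradiction. -/

open Set

theorem ContinuousOn.exists_last_nonneg {g : ℝ → ℝ} {a b : ℝ} (hg : ContinuousOn g (Icc a b))
    (hab : a ≤ b) (ha : 0 ≤ g a) : ∃ c ∈ Icc a b, 0 ≤ g c ∧ ∀ t ∈ Ioc c b, g t < 0 := by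
  have hcompact : IsCompact (Icc a b ∩ g ⁻¹' Ici 0) :=
    isCompact_Icc.of_isClosed_subset
      (hg.preimage_isClosed_of_isClosed isClosed_Icc isClosed_Ici) inter_subset_left
  obtain ⟨c, ⟨hc, hgc⟩, hgreatest⟩ := hcompact.exists_isGreatest ⟨a, left_mem_Icc.2 hab, ha⟩
  refine ⟨c, hc, hgc, fun t ht => ?_⟩
  by_contra! hgt
  exact (hgreatest ⟨⟨hc.1.trans ht.1.le, ht.2⟩, hgt⟩).not_gt ht.1

theorem nonneg_of_hasDerivAt_pos_of_neg {g g' : ℝ → ℝ} {a : ℝ} (hgc : ContinuousOn g (Ici a))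
    (hderiv : ∀ t, a < t → HasDerivAt g (g' t) t) (ha : 0 ≤ g a)
    (hpos : ∀ t, a < t → g t < 0 → 0 < g' t) : ∀ t, a ≤ t → 0 ≤ g t := by
  intro t₁ ht₁
  by_contra! hneg
  obtain ⟨t₀, ht₀, hgt₀, hneg_after⟩ :=
    (hgc.mono Icc_subset_Ici_self).exists_last_nonneg ht₁ ha
  have ht₀t₁ : t₀ < t₁ := ht₀.2.lt_of_ne (by rintro rfl; linarith)
  have hmono : StrictMonoOn g (Icc t₀ t₁) := by
    refine strictMonoOn_of_hasDerivWithinAt_pos (convex_Icc _ _)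
      (hgc.mono fun x hx => ht₀.1.trans hx.1) (f' := g') (fun x hx => ?_) fun x hx => ?_
    · rw [interior_Icc] at hx
      exact (hderiv x (ht₀.1.trans_lt hx.1)).hasDerivWithinAt
    · rw [interior_Icc] at hx
      exact hpos x (ht₀.1.trans_lt hx.1) (hneg_after x ⟨hx.1, hx.2.le⟩)
  have := hmono (left_mem_Icc.2 ht₀t₁.le) (right_mem_Icc.2 ht₀t₁.le) ht₀t₁
  linarith

theorem scalar_nagumo_invariance_general (g g' : ℝ → ℝ) (α : ℝ → ℝ)
    (hgc : ContinuousOn g (Set.Ici 0))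
    (hderiv : ∀ t, 0 < t → HasDerivAt g (g' t) t)
    (hg0 : 0 ≤ g 0)
    (hα : ∀ t, 0 < t → g' t ≥ -α (g t))
    (hαmono : StrictMono α) (hα0 : α 0 = 0) :
    ∀ t, 0 ≤ t → 0 ≤ g t := by
  refine nonneg_of_hasDerivAt_pos_of_neg hgc hderiv hg0 fun t ht hgt => ?_
  have : α (g t) < 0 := hα0 ▸ hαmono hgt
  linarith [hα t ht]

theorem scalar_nagumo_invariance (g g' : ℝ → ℝ) (α : ℝ → ℝ)
    (hgc : ContinuousOn g (Set.Ici 0))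
    (hderiv : ∀ t, 0 < t → HasDerivAt g (g' t) t)
    (hg0 : 0 ≤ g 0)
    (hbdry : ∀ t, 0 < t → g t = 0 → 0 ≤ g' t)
    (hα : ∀ t, 0 < t → g' t ≥ -α (g t))
    (hαlip : LocallyLipschitz α) (hαmono : StrictMono α) (hα0 : α 0 = 0) :
    ∀ t, 0 ≤ t → 0 ≤ g t :=
  scalar_nagumo_invariance_general g g' α hgc hderiv hg0 hα hαmono hα0
end
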